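/- Let $g_0,\dots,g_N, x_0,\dots,x_N \in k[u_1,\dots,u_r]$ with $\sum_j g_j D_I x_j = 0$ for all $|I| \le m-1$ (with $m \ge 1$). Define $\phi_m(g) := \sum_{|J| = m}\big(\sum_j g_j D_J x_j\big)\, U^J$ and $\overline{\phi}_m(g) := \sum_{|I| = m-1}\sum_{k=1}^r \big(\sum_j (\partial_k g_j) D_I x_j\big)\, U_k U^I$, elements of the polynomial ring $k[U_1,\dots,U_r]$ in formal variables $U_k$. Then $\overline{\phi}_m(g) = -m\,\phi_m(g)$. -/

import Mathlib

open MvPolynomial Finset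

/-- The multivariate Hasse derivative `D_I` on `k[u_1,…,u_r]`, defined on monomials by
`D_I(u^J) = (∏ t, (J t).choose (I t)) · u^(J-I)`. -/
noncomputable def hasse {k : Type*} [CommRing k] {r : ℕ} (I : Fin r → ℕ)
    (p : MvPolynomial (Fin r) k) : MvPolynomial (Fin r) k :=
  ∑ J ∈ p.support,
    MvPolynomial.monomial (J - Finsupp.equivFunOnFinite.symm I)
      (p.coeff J * ((∏ t, (J t).choose (I t) : ℕ) : k))

/-- The Finset of multi-indices `I : Fin r → ℕ` of total degree exactly `d`
(all entries are automatically `≤ d`). -/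
noncomputable def degIdx (r d : ℕ) : Finset (Fin r → ℕ) :=
  (Fintype.piFinset fun _ : Fin r => Finset.range (d + 1)).filter fun I => ∑ s, I s = d

section Aux

variable {k : Type*} [CommRing k] {r : ℕ}

lemma hasse_monomial (I : Fin r → ℕ) (J : Fin r →₀ ℕ) (c : k) :
    hasse I (MvPolynomial.monomial J c) =
      MvPolynomial.monomial (J - Finsupp.equivFunOnFinite.symm I)
        (c * ((∏ t, (J t).choose (I t) : ℕ) : k)) :=
  by
  classical
  unfold hasse
  by_cases hc : c = 0
  · simp [hc]
  · rw [MvPolynomial.support_monomial, if_neg hc, Finset.sum_singleton,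
      MvPolynomial.coeff_monomial, if_pos rfl]

lemma hasse_eq_sum_of_subset (I : Fin r → ℕ) (p : MvPolynomial (Fin r) k)
    (s : Finset (Fin r →₀ ℕ)) (h : p.support ⊆ s) :
    hasse I p = ∑ J ∈ s, MvPolynomial.monomial (J - Finsupp.equivFunOnFinite.symm I)
      (p.coeff J * ((∏ t, (J t).choose (I t) : ℕ) : k)) :=
  Finset.sum_subset h (fun J _ hJ => by
    rw [MvPolynomial.notMem_support_iff.mp hJ, zero_mul, map_zero])

lemma hasse_add (I : Fin r → ℕ) (p q : MvPolynomial (Fin r) k) :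
    hasse I (p + q) = hasse I p + hasse I q :=
  by
  classical
  rw [hasse_eq_sum_of_subset I (p + q) (p.support ∪ q.support) MvPolynomial.support_add,
    hasse_eq_sum_of_subset I p _ Finset.subset_union_left,
    hasse_eq_sum_of_subset I q _ Finset.subset_union_right, ← Finset.sum_add_distrib]
  refine Finset.sum_congr rfl fun J _ => ?_
  rw [MvPolynomial.coeff_add, add_mul, map_add]

lemma symm_add_single (I : Fin r → ℕ) (t : Fin r) :
    Finsupp.equivFunOnFinite.symm I + Finsupp.single t 1 =
      Finsupp.equivFunOnFinite.symm (fun s => I s + if s = t then 1 else 0) := by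
  ext s
  simp only [Finsupp.add_apply, Finsupp.coe_equivFunOnFinite_symm,
    Finsupp.single_apply]
  rcases eq_or_ne s t with h | h
  · simp [h]
  · simp [h, Ne.symm h]

lemma pderiv_hasse (t : Fin r) (I : Fin r → ℕ) (p : MvPolynomial (Fin r) k) :
    MvPolynomial.pderiv t (hasse I p) =
      ((I t + 1 : ℕ) : k) • hasse (fun s => I s + if s = t then 1 else 0) p := by
  induction p using MvPolynomial.induction_on' with
  | add p q hp hq => rw [hasse_add, hasse_add, map_add, hp, hq, smul_add]
  | monomial J c =>
    rw [hasse_monomial, hasse_monomial, MvPolynomial.pderiv_monomial,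
      MvPolynomial.smul_monomial]
    have hidx : J - Finsupp.equivFunOnFinite.symm I - Finsupp.single t 1
        = J - Finsupp.equivFunOnFinite.symm (fun s => I s + if s = t then 1 else 0) := by
      rw [tsub_tsub, symm_add_single]
    rw [hidx]
    congr 1
    have key : (∏ s, (J s).choose (I s)) * (J t - I t)
        = (I t + 1) * ∏ s, (J s).choose (I s + if s = t then 1 else 0) := by
      have e1 : (∏ s, (J s).choose (I s))
          = (J t).choose (I t) * ∏ s ∈ Finset.univ.erase t, (J s).choose (I s) :=
        (Finset.mul_prod_erase Finset.univ _ (Finset.mem_univ t)).symm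
      have e2 : (∏ s, (J s).choose (I s + if s = t then 1 else 0))
          = (J t).choose (I t + 1) * ∏ s ∈ Finset.univ.erase t, (J s).choose (I s) := by
        rw [← Finset.mul_prod_erase Finset.univ _ (Finset.mem_univ t), if_pos rfl]
        congr 1
        exact Finset.prod_congr rfl fun s hs => by
          rw [if_neg (Finset.ne_of_mem_erase hs), add_zero]
      rw [e1, e2]
      calc ((J t).choose (I t) * ∏ s ∈ Finset.univ.erase t, (J s).choose (I s)) * (J t - I t)
          = ((J t).choose (I t) * (J t - I t))
              * ∏ s ∈ Finset.univ.erase t, (J s).choose (I s) := by ring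
        _ = ((J t).choose (I t + 1) * (I t + 1))
              * ∏ s ∈ Finset.univ.erase t, (J s).choose (I s) := by
            rw [Nat.choose_succ_right_eq]
        _ = (I t + 1) * ((J t).choose (I t + 1)
              * ∏ s ∈ Finset.univ.erase t, (J s).choose (I s)) := by ring
    have happ : (J - Finsupp.equivFunOnFinite.symm I) t = J t - I t := by
      rw [Finsupp.tsub_apply, Finsupp.coe_equivFunOnFinite_symm]
    rw [happ, smul_eq_mul, mul_assoc, ← Nat.cast_mul, key, Nat.cast_mul]
    ring

lemma mem_degIdx {r d : ℕ} {I : Fin r → ℕ} : I ∈ degIdx r d ↔ ∑ s, I s = d := by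
  simp only [degIdx, Finset.mem_filter, Fintype.mem_piFinset, Finset.mem_range]
  constructor
  · exact fun h => h.2
  · intro h
    refine ⟨fun s => ?_, h⟩
    have := Finset.single_le_sum (f := I) (fun i _ => Nat.zero_le _) (Finset.mem_univ s)
    omega

end Aux

/-- Local form of the main theorem: if `∑_j g_j D_I x_j = 0` for all `|I| ≤ m-1`, then with
`φ_m(g) = ∑_{|J|=m} (∑_j g_j D_J x_j) U^J` and
`φ̄_m(g) = ∑_{|I|=m-1} ∑_k (∑_j (∂_k g_j) D_I x_j) U_k U^I` (polynomials in the formal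
variables `U_1,…,U_r` with coefficients in `k[u_1,…,u_r]`), one has `φ̄_m(g) = -m·φ_m(g)`. -/
theorem stmt16 {k : Type*} [Field k] {r N m : ℕ} (hm : 1 ≤ m)
    (g x : Fin (N + 1) → MvPolynomial (Fin r) k)
    (H : ∀ I : Fin r → ℕ, (∑ t, I t) + 1 ≤ m → ∑ j, g j * hasse I (x j) = 0) :
    (∑ I ∈ degIdx r (m - 1), ∑ t : Fin r,
        (MvPolynomial.monomial (Finsupp.equivFunOnFinite.symm I + Finsupp.single t 1)
          (∑ j, MvPolynomial.pderiv t (g j) * hasse I (x j)) :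
          MvPolynomial (Fin r) (MvPolynomial (Fin r) k)))
      = -(m • ∑ J ∈ degIdx r m,
          (MvPolynomial.monomial (Finsupp.equivFunOnFinite.symm J)
            (∑ j, g j * hasse J (x j)) :
            MvPolynomial (Fin r) (MvPolynomial (Fin r) k))) := by
  classical
  -- the key relation coming from differentiating the hypothesis
  have hrel : ∀ I ∈ degIdx r (m - 1), ∀ t : Fin r,
      (∑ j, MvPolynomial.pderiv t (g j) * hasse I (x j))
        = -(((I t + 1 : ℕ) : k) •
            ∑ j, g j * hasse (fun s => I s + if s = t then 1 else 0) (x j)) := by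
    intro I hI t
    have hIsum : ∑ s, I s = m - 1 := mem_degIdx.mp hI
    have h0 := H I (by omega)
    have h1 := congrArg (MvPolynomial.pderiv t) h0
    rw [map_sum, map_zero] at h1
    simp only [MvPolynomial.pderiv_mul, pderiv_hasse] at h1
    rw [Finset.sum_add_distrib] at h1
    have h2 : (∑ j, g j * (((I t + 1 : ℕ) : k) •
          hasse (fun s => I s + if s = t then 1 else 0) (x j)))
        = ((I t + 1 : ℕ) : k) •
            ∑ j, g j * hasse (fun s => I s + if s = t then 1 else 0) (x j) := by
      rw [Finset.smul_sum]
      refine Finset.sum_congr rfl fun j _ => ?_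
      rw [mul_smul_comm]
    rw [h2] at h1
    linear_combination h1
  have key : ∀ t : Fin r,
      (∑ I ∈ degIdx r (m - 1),
        (MvPolynomial.monomial (Finsupp.equivFunOnFinite.symm I + Finsupp.single t 1)
          (∑ j, MvPolynomial.pderiv t (g j) * hasse I (x j)) :
          MvPolynomial (Fin r) (MvPolynomial (Fin r) k)))
      = ∑ J ∈ degIdx r m,
          MvPolynomial.monomial (Finsupp.equivFunOnFinite.symm J)
            (-(((J t : ℕ) : k) • ∑ j, g j * hasse J (x j))) := by
    intro t
    have hfilter : ∑ J ∈ (degIdx r m).filter (fun J => J t ≠ 0),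
          (MvPolynomial.monomial (Finsupp.equivFunOnFinite.symm J)
            (-(((J t : ℕ) : k) • ∑ j, g j * hasse J (x j))) :
            MvPolynomial (Fin r) (MvPolynomial (Fin r) k))
        = ∑ J ∈ degIdx r m,
            MvPolynomial.monomial (Finsupp.equivFunOnFinite.symm J)
              (-(((J t : ℕ) : k) • ∑ j, g j * hasse J (x j))) := by
      refine Finset.sum_filter_of_ne fun J hJ hne => ?_
      intro h0
      apply hne
      rw [h0]
      simp
    rw [← hfilter]
    refine Finset.sum_nbij' (fun I => fun s => I s + if s = t then 1 else 0)
      (fun J => fun s => J s - if s = t then 1 else 0) ?_ ?_ ?_ ?_ ?_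
    · intro I hI
      have h := mem_degIdx.mp hI
      refine Finset.mem_filter.mpr ⟨mem_degIdx.mpr ?_, by simp⟩
      simp only [Finset.sum_add_distrib, h, Finset.sum_ite_eq', Finset.mem_univ, if_true]
      omega
    · intro J hJ
      obtain ⟨hJ1, hJ2⟩ := Finset.mem_filter.mp hJ
      have h := mem_degIdx.mp hJ1
      refine mem_degIdx.mpr ?_
      show (∑ s, (J s - if s = t then 1 else 0)) = m - 1
      have e1 : (∑ s, (J s - if s = t then 1 else 0))
          = (J t - 1) + ∑ s ∈ Finset.univ.erase t, J s := by
        rw [← Finset.add_sum_erase Finset.univ _ (Finset.mem_univ t)]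
        simp only [if_pos rfl]
        congr 1
        exact Finset.sum_congr rfl fun s hs => by
          rw [if_neg (Finset.ne_of_mem_erase hs), Nat.sub_zero]
      have e2 : ∑ s, J s = J t + ∑ s ∈ Finset.univ.erase t, J s :=
        (Finset.add_sum_erase Finset.univ _ (Finset.mem_univ t)).symm
      omega
    · intro I hI
      funext s
      rcases eq_or_ne s t with h | h <;> simp [h]
    · intro J hJ
      obtain ⟨_, hJ2⟩ := Finset.mem_filter.mp hJ
      funext s
      show (J s - if s = t then 1 else 0) + (if s = t then 1 else 0) = J s
      rcases eq_or_ne s t with h | h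
      · subst h
        simp only [if_true, eq_self_iff_true]
        omega
      · simp [h]
    · intro I hI
      rw [hrel I hI t, symm_add_single I t]
      congr 2
      simp
  rw [Finset.sum_comm, Finset.sum_congr rfl fun t _ => key t, Finset.sum_comm,
    Finset.smul_sum, ← Finset.sum_neg_distrib]
  refine Finset.sum_congr rfl fun J hJ => ?_
  rw [← map_sum, MvPolynomial.smul_monomial, ← map_neg]
  congr 1
  rw [Finset.sum_neg_distrib, ← Finset.sum_smul, ← Nat.cast_sum, mem_degIdx.mp hJ,
    Nat.cast_smul_eq_nsmul]
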